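/- Let I_n be a quadrature rule with error functional E_n = I - I_n, exact on P_{2n-1}, and let A_{n+1} satisfy E(A_{n+1})(p) := I(p) - A_{n+1}(p) = -E_n(p) for all p ∈ P_{2n+1}. Then for any γ > 0, the generalized averaged rule H_{2n+1} := ((1+γ) I_n + A_{n+1})/(2+γ) has error I(p) - H_{2n+1}(p) = (γ/(2+γ)) E_n(p) for all p ∈ P_{2n+1}; in particular H_{2n+1} is exact on P_{2n-1}. -/
import Mathlib

open Polynomial

/-- For any `γ > 0`, the generalized averaged rule `H = ((1+γ) In + A)/(2+γ)` has error
`(γ/(2+γ))` times the Gaussian error on polynomials of degree at most `2n+1`; in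
particular it is exact on polynomials of degree at most `2n-1`. -/
theorem generalized_averaged_rule_error (n : ℕ) (γ : ℝ) (hγ : 0 < γ)
    (I In A : (ℝ → ℝ) → ℝ)
    (hIn : ∀ p : Polynomial ℝ, p.natDegree ≤ 2 * n - 1 → I p.eval = In p.eval)
    (hA : ∀ p : Polynomial ℝ, p.natDegree ≤ 2 * n + 1 →
      I p.eval - A p.eval = -(I p.eval - In p.eval)) :
    (∀ p : Polynomial ℝ, p.natDegree ≤ 2 * n + 1 →
      I p.eval - ((1 + γ) * In p.eval + A p.eval) / (2 + γ) =
        γ / (2 + γ) * (I p.eval - In p.eval)) ∧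
    (∀ p : Polynomial ℝ, p.natDegree ≤ 2 * n - 1 →
      I p.eval = ((1 + γ) * In p.eval + A p.eval) / (2 + γ)) := by
  have h2γ : (2 : ℝ) + γ ≠ 0 := by linarith
  have main : ∀ p : Polynomial ℝ, p.natDegree ≤ 2 * n + 1 →
      I p.eval - ((1 + γ) * In p.eval + A p.eval) / (2 + γ) =
        γ / (2 + γ) * (I p.eval - In p.eval) := by
    intro p hp
    have h := hA p hp
    have hAeq : A p.eval = 2 * I p.eval - In p.eval := by linarith
    rw [hAeq]
    field_simp
    ring
  refine ⟨main, fun p hp => ?_⟩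
  have h1 := main p (le_trans hp (by omega))
  have h2 := hIn p hp
  rw [h2] at h1 ⊢
  have : In p.eval - ((1 + γ) * In p.eval + A p.eval) / (2 + γ) = 0 := by
    rw [h1]; ring
  linarith
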